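/- arXiv:1309.7937 — 7 statements merged into one kernel-verified Lean document; each statement's English description precedes it below -/
import Mathlib

section
/- Let ε, c_Ω1, c1, c2, c3 > 0 and control gains α, k1, k2, k3, k4 > 0 satisfy α > 1/2, k1 > 1/(2 ε c_Ω1), k2 ≥ c1/(ε c_Ω1), k3 ≥ c2/(ε c_Ω1), and k4 ≥ c3/(ε c_Ω1), and set γ1 ≜ min(α − 1/2, ε c_Ω1 k1 − 1/2). Then for all real numbers e1, e2, χ, B_k, Ω with |χ| ≤ c1 + c2‖z‖ + c3‖z‖², B_k ≤ −ε, and Ω ≥ c_Ω1, the following inequality holds: −α e1² + e1 e2 + χ e2 + B_k Ω k1 e2² + B_k Ω (k2 + k3‖z‖ + k4‖z‖²)|e2| ≤ −γ1 ‖z‖². -/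
/-!
Since `Bk Ω ≤ -ε c_Ω1 < 0`, the gains `k2, k3, k4` make the negative term
`Bk Ω (k2 + k3‖z‖ + k4‖z‖²)|e2|` dominate the disturbance term `χ e2`, so the two cancel.
What is left is the quadratic form `-α e1² + e1 e2 - ε c_Ω1 k1 e2²`, and Young's inequality
`e1 e2 ≤ (e1² + e2²)/2` bounds it by `-γ1 (e1² + e2²)`.
-/

lemma mul_le_neg_mul_of_le_neg {a b c d : ℝ} (hb : 0 ≤ b) (hc : 0 ≤ c) (hab : a ≤ -b)
    (hcd : c ≤ d) : a * d ≤ -(b * c) := by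
  nlinarith

lemma neg_mul_sq_add_mul_sub_mul_sq_le (a b x y : ℝ) :
    -a * x ^ 2 + x * y - b * y ^ 2 ≤ -min (a - 1/2) (b - 1/2) * (x ^ 2 + y ^ 2) := by
  have young : x * y ≤ (x ^ 2 + y ^ 2) / 2 := by nlinarith [sq_nonneg (x - y)]
  have hx : min (a - 1/2) (b - 1/2) * x ^ 2 ≤ (a - 1/2) * x ^ 2 :=
    mul_le_mul_of_nonneg_right (min_le_left _ _) (sq_nonneg x)
  have hy : min (a - 1/2) (b - 1/2) * y ^ 2 ≤ (b - 1/2) * y ^ 2 :=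
    mul_le_mul_of_nonneg_right (min_le_right _ _) (sq_nonneg y)
  linarith

lemma add_mul_add_mul_sq_le_mul_of_div_le {κ s c₀ c₁ c₂ k₀ k₁ k₂ : ℝ} (hκ : 0 < κ) (hs : 0 ≤ s)
    (h₀ : c₀ / κ ≤ k₀) (h₁ : c₁ / κ ≤ k₁) (h₂ : c₂ / κ ≤ k₂) :
    c₀ + c₁ * s + c₂ * s ^ 2 ≤ κ * (k₀ + k₁ * s + k₂ * s ^ 2) := by
  rw [div_le_iff₀' hκ] at h₀ h₁ h₂
  have h₁s := mul_le_mul_of_nonneg_right h₁ hs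
  have h₂s := mul_le_mul_of_nonneg_right h₂ (sq_nonneg s)
  linarith

lemma mul_add_mul_mul_abs_nonpos {χ y β κ K : ℝ} (hκ : 0 < κ) (hβ : β ≤ -κ)
    (hχ : |χ| ≤ κ * K) : χ * y + β * K * |y| ≤ 0 := by
  have hK : 0 ≤ K := nonneg_of_mul_nonneg_right ((abs_nonneg χ).trans hχ) hκ
  have hχy : χ * y ≤ κ * K * |y| :=
    calc χ * y ≤ |χ| * |y| := by rw [← abs_mul]; exact le_abs_self _
      _ ≤ κ * K * |y| := mul_le_mul_of_nonneg_right hχ (abs_nonneg y)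
  have hβK : β * K * |y| ≤ -κ * K * |y| :=
    mul_le_mul_of_nonneg_right (mul_le_mul_of_nonneg_right hβ hK) (abs_nonneg y)
  linarith

theorem controlled_region_decay_general (ε cΩ1 c1 c2 c3 α k1 k2 k3 k4 : ℝ)
    (hε : 0 < ε) (hcΩ1 : 0 < cΩ1)
    (hk1pos : 0 < k1)
    (hk2 : c1/(ε * cΩ1) ≤ k2) (hk3 : c2/(ε * cΩ1) ≤ k3) (hk4 : c3/(ε * cΩ1) ≤ k4) :
    ∀ e1 e2 χ Bk Ω : ℝ,
      |χ| ≤ c1 + c2 * Real.sqrt (e1 ^ 2 + e2 ^ 2)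
            + c3 * Real.sqrt (e1 ^ 2 + e2 ^ 2) ^ 2 →
      Bk ≤ -ε → cΩ1 ≤ Ω →
      -α * e1 ^ 2 + e1 * e2 + χ * e2 + Bk * Ω * (k1 * e2 ^ 2)
          + Bk * Ω * (k2 + k3 * Real.sqrt (e1 ^ 2 + e2 ^ 2)
              + k4 * Real.sqrt (e1 ^ 2 + e2 ^ 2) ^ 2) * |e2|
        ≤ -(min (α - 1/2) (ε * cΩ1 * k1 - 1/2)) * Real.sqrt (e1 ^ 2 + e2 ^ 2) ^ 2 := by
  intro e1 e2 χ Bk Ω hχ hBk hΩ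
  set s := Real.sqrt (e1 ^ 2 + e2 ^ 2)
  have hs : s ^ 2 = e1 ^ 2 + e2 ^ 2 := Real.sq_sqrt (by positivity)
  have hκ : 0 < ε * cΩ1 := mul_pos hε hcΩ1
  have hBΩ : Bk * Ω ≤ -(ε * cΩ1) := mul_le_neg_mul_of_le_neg hε.le hcΩ1.le hBk hΩ
  have hk1_term : Bk * Ω * (k1 * e2 ^ 2) ≤ -(ε * cΩ1) * (k1 * e2 ^ 2) :=
    mul_le_mul_of_nonneg_right hBΩ (by positivity)
  have robust := mul_add_mul_mul_abs_nonpos (y := e2) hκ hBΩ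
    (hχ.trans (add_mul_add_mul_sq_le_mul_of_div_le hκ (Real.sqrt_nonneg _) hk2 hk3 hk4))
  have quadratic := neg_mul_sq_add_mul_sub_mul_sq_le α (ε * cΩ1 * k1) e1 e2
  rw [← hs] at quadratic
  linarith

/-- The key algebraic estimate (23)–(24): under the stated gain conditions,
the Lyapunov derivative expression in the controlled region is bounded by
`−γ1‖z‖²` with `γ1 = min(α − 1/2, ε c_Ω1 k1 − 1/2)`. -/
theorem controlled_region_decay (ε cΩ1 c1 c2 c3 α k1 k2 k3 k4 : ℝ)
    (hε : 0 < ε) (hcΩ1 : 0 < cΩ1) (hc1 : 0 < c1) (hc2 : 0 < c2) (hc3 : 0 < c3)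
    (hαpos : 0 < α) (hk1pos : 0 < k1) (hk2pos : 0 < k2) (hk3pos : 0 < k3)
    (hk4pos : 0 < k4)
    (hα : 1/2 < α) (hk1 : 1/(2 * ε * cΩ1) < k1)
    (hk2 : c1/(ε * cΩ1) ≤ k2) (hk3 : c2/(ε * cΩ1) ≤ k3) (hk4 : c3/(ε * cΩ1) ≤ k4) :
    ∀ e1 e2 χ Bk Ω : ℝ,
      |χ| ≤ c1 + c2 * Real.sqrt (e1 ^ 2 + e2 ^ 2)
            + c3 * Real.sqrt (e1 ^ 2 + e2 ^ 2) ^ 2 →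
      Bk ≤ -ε → cΩ1 ≤ Ω →
      -α * e1 ^ 2 + e1 * e2 + χ * e2 + Bk * Ω * (k1 * e2 ^ 2)
          + Bk * Ω * (k2 + k3 * Real.sqrt (e1 ^ 2 + e2 ^ 2)
              + k4 * Real.sqrt (e1 ^ 2 + e2 ^ 2) ^ 2) * |e2|
        ≤ -(min (α - 1/2) (ε * cΩ1 * k1 - 1/2)) * Real.sqrt (e1 ^ 2 + e2 ^ 2) ^ 2 :=
  controlled_region_decay_general ε cΩ1 c1 c2 c3 α k1 k2 k3 k4 hε hcΩ1 hk1pos hk2 hk3 hk4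
end

section
/- Suppose on an interval [t0, t1] that e1, e2, M : [t0, t1] → ℝ are differentiable, c_m ≤ M(t) ≤ c_M, V(t) = M′(t)/2, |χ(t)| ≤ c1 + c2‖z(t)‖ + c3‖z(t)‖², B_k(t) ≤ −ε, c_Ω1 ≤ Ω(t), and the closed-loop error dynamics hold: e1′ = e2 − α e1 and M e2′ = χ − V e2 + B_k Ω [k1 e2 + (k2 + k3‖z‖ + k4‖z‖²) sign(e2)], where sign denotes the real sign function (sign(0) = 0). If the gain conditions α > 1/2, k1 > 1/(2 ε c_Ω1), k2 ≥ c1/(ε c_Ω1), k3 ≥ c2/(ε c_Ω1), k4 ≥ c3/(ε c_Ω1) hold, then for all t ∈ [t0, t1]: ‖z(t)‖ ≤ √(λ2/λ1) ‖z(t0)‖ e^{−γ1 (t − t0)/(2 λ2)}, where γ1 ≜ min(α − 1/2, ε c_Ω1 k1 − 1/2). -/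
/-!
With `W = e1²/2 + M e2²/2` we have `λ1‖z‖² ≤ W ≤ λ2‖z‖²` and, since `V = M'/2` cancels the
`M'` terms, `W' = e1 e2 - α e1² + e2 χ + Bk Ω (k1 e2² + κ |e2|)` with
`κ = k2 + k3‖z‖ + k4‖z‖²`. The gains make `ε cΩ1 κ` dominate the bound on `|χ|`, so the sliding
term absorbs `e2 χ`, and Young's inequality on `e1 e2` leaves `W' ≤ -γ1‖z‖² ≤ -(γ1/λ2) W`.
Grönwall gives `W(t) ≤ W(t0) e^{-γ1 (t-t0)/λ2}`, and the sandwich on `W` turns this into the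
bound on `‖z‖`.
-/

/-- The Euclidean norm of the error vector `z = (e1, e2)`. -/
noncomputable def zNorm (e1 e2 : ℝ → ℝ) (t : ℝ) : ℝ :=
  Real.sqrt ((e1 t) ^ 2 + (e2 t) ^ 2)

open Real Set

lemma zNorm_nonneg (e1 e2 : ℝ → ℝ) (t : ℝ) : 0 ≤ zNorm e1 e2 t := sqrt_nonneg _

lemma zNorm_sq (e1 e2 : ℝ → ℝ) (t : ℝ) : zNorm e1 e2 t ^ 2 = e1 t ^ 2 + e2 t ^ 2 :=
  sq_sqrt (by positivity)

lemma Real.self_mul_sign (x : ℝ) : x * Real.sign x = |x| := by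
  rcases lt_trichotomy x 0 with hx | rfl | hx
  · rw [sign_of_neg hx, abs_of_neg hx, mul_neg_one]
  · simp
  · rw [sign_of_pos hx, abs_of_pos hx, mul_one]

lemma mul_le_neg_mul_of_le_neg_s3 {a b p q : ℝ} (ha : a ≤ -p) (hb : q ≤ b) (hp : 0 ≤ p)
    (hq : 0 ≤ q) : a * b ≤ -(p * q) := by
  nlinarith [mul_nonneg (by linarith : (0 : ℝ) ≤ -p - a) (sub_nonneg.2 hb)]

/-- Young's inequality `x y ≤ (x² + y²)/2` on the cross term. -/
lemma mul_sub_mul_sq_sub_mul_sq_le {x y α σ γ : ℝ} (hα : γ ≤ α - 1 / 2) (hσ : γ ≤ σ - 1 / 2) :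
    x * y - α * x ^ 2 - σ * y ^ 2 ≤ -γ * (x ^ 2 + y ^ 2) := by
  nlinarith [sq_nonneg (x - y), sq_nonneg x, sq_nonneg y]

lemma mul_add_mul_mul_abs_nonpos_s3 {e χ b κ s : ℝ} (hs : 0 < s) (hb : b ≤ -s)
    (hχ : |χ| ≤ s * κ) : e * χ + b * κ * |e| ≤ 0 := by
  have hκ : 0 ≤ κ := nonneg_of_mul_nonneg_right ((abs_nonneg χ).trans hχ) hs
  have hχe : e * χ ≤ |e| * (s * κ) :=
    (le_abs_self _).trans (by rw [abs_mul]; exact mul_le_mul_of_nonneg_left hχ (abs_nonneg e))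
  nlinarith [mul_nonneg hκ (abs_nonneg e)]

lemma quadratic_le_mul_gain {c1 c2 c3 k2 k3 k4 s n : ℝ} (hs : 0 < s) (hn : 0 ≤ n)
    (hk2 : c1 / s ≤ k2) (hk3 : c2 / s ≤ k3) (hk4 : c3 / s ≤ k4) :
    c1 + c2 * n + c3 * n ^ 2 ≤ s * (k2 + k3 * n + k4 * n ^ 2) := by
  rw [div_le_iff₀ hs] at hk2 hk3 hk4
  nlinarith [mul_le_mul_of_nonneg_right hk3 hn, mul_le_mul_of_nonneg_right hk4 (sq_nonneg n)]

lemma le_neg_div_mul_of_le_neg_mul {d w q γ lam : ℝ} (hγ : 0 ≤ γ) (hlam : 0 < lam)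
    (hd : d ≤ -γ * q) (hw : w ≤ lam * q) : d ≤ -(γ / lam) * w := by
  have : γ / lam * w ≤ γ * q := by
    rw [div_mul_eq_mul_div, div_le_iff₀ hlam]
    nlinarith
  linarith

lemma le_mul_exp_of_hasDerivAt_le_mul {W W' : ℝ → ℝ} {a b K : ℝ}
    (hW : ∀ t ∈ Icc a b, HasDerivAt W (W' t) t) (hW' : ∀ t ∈ Ico a b, W' t ≤ K * W t) :
    ∀ t ∈ Icc a b, W t ≤ W a * exp (K * (t - a)) := by
  intro t ht
  have hcont : ContinuousOn W (Icc a b) := fun t ht => (hW t ht).continuousAt.continuousWithinAt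
  have h := le_gronwallBound_of_liminf_deriv_right_le hcont
    (fun x hx _ hr => (hW x (Ico_subset_Icc_self hx)).hasDerivWithinAt.liminf_right_slope_le hr)
    le_rfl (fun x hx => (add_zero (K * W x)).symm ▸ hW' x hx) t ht
  rwa [gronwallBound_ε0] at h

lemma le_sqrt_div_mul_mul_exp {x y lam1 lam2 c : ℝ} (hx : 0 ≤ x) (hy : 0 ≤ y) (hlam1 : 0 < lam1)
    (hlam2 : 0 ≤ lam2) (h : lam1 * x ^ 2 ≤ lam2 * y ^ 2 * exp (2 * c)) :
    x ≤ sqrt (lam2 / lam1) * y * exp c := by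
  rw [← pow_le_pow_iff_left₀ hx (by positivity) two_ne_zero, mul_pow, mul_pow,
    sq_sqrt (by positivity), ← exp_nat_mul, Nat.cast_ofNat, div_mul_eq_mul_div, div_mul_eq_mul_div,
    le_div_iff₀ hlam1]
  linarith

noncomputable def lyapunov (M e1 e2 : ℝ → ℝ) (t : ℝ) : ℝ := e1 t ^ 2 / 2 + M t * e2 t ^ 2 / 2

lemma hasDerivAt_lyapunov {M e1 e2 : ℝ → ℝ} {dM d1 d2 t : ℝ} (hM : HasDerivAt M dM t)
    (h1 : HasDerivAt e1 d1 t) (h2 : HasDerivAt e2 d2 t) :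
    HasDerivAt (lyapunov M e1 e2) (e1 t * d1 + dM * e2 t ^ 2 / 2 + e2 t * (M t * d2)) t := by
  refine (((h1.fun_pow 2).div_const 2).add ((hM.fun_mul (h2.fun_pow 2)).div_const 2)).congr_deriv ?_
  norm_num
  ring

lemma min_mul_zNorm_sq_le_lyapunov {M e1 e2 : ℝ → ℝ} {cm t : ℝ} (hM : cm ≤ M t) :
    min (1 / 2) (cm / 2) * zNorm e1 e2 t ^ 2 ≤ lyapunov M e1 e2 t := by
  rw [zNorm_sq, lyapunov]
  nlinarith [min_le_left (1 / 2 : ℝ) (cm / 2), min_le_right (1 / 2 : ℝ) (cm / 2),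
    sq_nonneg (e1 t), sq_nonneg (e2 t)]

lemma lyapunov_le_max_mul_zNorm_sq {M e1 e2 : ℝ → ℝ} {cM t : ℝ} (hM : M t ≤ cM) :
    lyapunov M e1 e2 t ≤ max (1 / 2) (cM / 2) * zNorm e1 e2 t ^ 2 := by
  rw [zNorm_sq, lyapunov]
  nlinarith [le_max_left (1 / 2 : ℝ) (cM / 2), le_max_right (1 / 2 : ℝ) (cM / 2),
    sq_nonneg (e1 t), sq_nonneg (e2 t)]

lemma lyapunov_deriv_le {e1 e2 m dM de2 χ b κ α k1 s γ : ℝ} (hs : 0 < s) (hk1 : 0 ≤ k1)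
    (hsys : m * de2 = χ - dM / 2 * e2 + b * (k1 * e2 + κ * Real.sign e2))
    (hb : b ≤ -s) (hχ : |χ| ≤ s * κ) (hγα : γ ≤ α - 1 / 2) (hγk : γ ≤ s * k1 - 1 / 2) :
    e1 * (e2 - α * e1) + dM * e2 ^ 2 / 2 + e2 * (m * de2) ≤ -γ * (e1 ^ 2 + e2 ^ 2) := by
  have hsliding : e2 * χ + b * κ * |e2| ≤ 0 := mul_add_mul_mul_abs_nonpos_s3 hs hb hχ
  have hdamping : b * k1 * e2 ^ 2 ≤ -(s * k1) * e2 ^ 2 := by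
    nlinarith [mul_nonneg hk1 (sq_nonneg e2)]
  calc e1 * (e2 - α * e1) + dM * e2 ^ 2 / 2 + e2 * (m * de2)
      = e1 * e2 - α * e1 ^ 2 + b * k1 * e2 ^ 2 + (e2 * χ + b * κ * |e2|) := by
        rw [hsys, ← Real.self_mul_sign]; ring
    _ ≤ e1 * e2 - α * e1 ^ 2 - s * k1 * e2 ^ 2 := by linarith
    _ ≤ -γ * (e1 ^ 2 + e2 ^ 2) := mul_sub_mul_sq_sub_mul_sq_le hγα hγk

theorem controlled_region_exponential_stability_general
    (cm cM c1 c2 c3 ε cΩ1 α k1 k2 k3 k4 t0 t1 lam1 lam2 γ1 : ℝ)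
    (hcm : 0 < cm)
    (hε : 0 < ε) (hcΩ1 : 0 < cΩ1)
    (hlam1 : lam1 = min (1/2) (cm/2)) (hlam2 : lam2 = max (1/2) (cM/2))
    (hγ1 : γ1 = min (α - 1/2) (ε * cΩ1 * k1 - 1/2))
    (hα : 1/2 < α) (hk1 : 1/(2 * ε * cΩ1) < k1)
    (hk2 : c1/(ε * cΩ1) ≤ k2) (hk3 : c2/(ε * cΩ1) ≤ k3) (hk4 : c3/(ε * cΩ1) ≤ k4)
    (e1 e2 M χ V Bk Ω : ℝ → ℝ)
    (hMb : ∀ t ∈ Set.Icc t0 t1, cm ≤ M t ∧ M t ≤ cM)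
    (hMdiff : ∀ t ∈ Set.Icc t0 t1, DifferentiableAt ℝ M t)
    (hV : ∀ t ∈ Set.Icc t0 t1, V t = deriv M t / 2)
    (hχ : ∀ t ∈ Set.Icc t0 t1,
      |χ t| ≤ c1 + c2 * zNorm e1 e2 t + c3 * (zNorm e1 e2 t) ^ 2)
    (hBk : ∀ t ∈ Set.Icc t0 t1, Bk t ≤ -ε)
    (hΩ : ∀ t ∈ Set.Icc t0 t1, cΩ1 ≤ Ω t)
    (he1 : ∀ t ∈ Set.Icc t0 t1, HasDerivAt e1 (e2 t - α * e1 t) t)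
    (he2diff : ∀ t ∈ Set.Icc t0 t1, DifferentiableAt ℝ e2 t)
    (he2 : ∀ t ∈ Set.Icc t0 t1,
      M t * deriv e2 t = χ t - V t * e2 t
        + Bk t * Ω t * (k1 * e2 t
          + (k2 + k3 * zNorm e1 e2 t + k4 * (zNorm e1 e2 t) ^ 2)
              * Real.sign (e2 t))) :
    ∀ t ∈ Set.Icc t0 t1,
      zNorm e1 e2 t ≤ Real.sqrt (lam2 / lam1) * zNorm e1 e2 t0
        * Real.exp (-(γ1 / (2 * lam2)) * (t - t0)) := by
  have hs : 0 < ε * cΩ1 := mul_pos hε hcΩ1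
  have hsk1 : 1 / 2 < ε * cΩ1 * k1 := by
    rw [div_lt_iff₀ (by positivity)] at hk1
    linarith
  have hk1_pos : 0 < k1 := pos_of_mul_pos_right (by linarith) hs.le
  have hγ1_nonneg : 0 ≤ γ1 := hγ1 ▸ le_min (by linarith) (by linarith)
  have hlam1_pos : 0 < lam1 := hlam1 ▸ by positivity
  have hlam2_pos : 0 < lam2 := hlam2 ▸ lt_max_of_lt_left (by norm_num)
  have hderiv (t : ℝ) (ht : t ∈ Icc t0 t1) := hasDerivAt_lyapunov (hMdiff t ht).hasDerivAt
    (he1 t ht) (he2diff t ht).hasDerivAt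
  have hdecay : ∀ t ∈ Ico t0 t1, e1 t * (e2 t - α * e1 t) + deriv M t * e2 t ^ 2 / 2
      + e2 t * (M t * deriv e2 t) ≤ -(γ1 / lam2) * lyapunov M e1 e2 t := by
    intro t ht
    have ht : t ∈ Icc t0 t1 := Ico_subset_Icc_self ht
    have hsys := he2 t ht
    rw [hV t ht] at hsys
    have hgain := (hχ t ht).trans (quadratic_le_mul_gain hs (zNorm_nonneg e1 e2 t) hk2 hk3 hk4)
    have hupper := hlam2 ▸ lyapunov_le_max_mul_zNorm_sq (e1 := e1) (e2 := e2) (hMb t ht).2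
    rw [zNorm_sq] at hupper
    exact le_neg_div_mul_of_le_neg_mul hγ1_nonneg hlam2_pos (lyapunov_deriv_le hs hk1_pos.le hsys
      (mul_le_neg_mul_of_le_neg_s3 (hBk t ht) (hΩ t ht) hε.le hcΩ1.le) hgain
      (hγ1 ▸ min_le_left _ _) (hγ1 ▸ min_le_right _ _)) hupper
  intro t ht
  have ht0 : t0 ∈ Icc t0 t1 := ⟨le_rfl, ht.1.trans ht.2⟩
  refine le_sqrt_div_mul_mul_exp (zNorm_nonneg _ _ _) (zNorm_nonneg _ _ _) hlam1_pos
    hlam2_pos.le ?_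
  calc lam1 * zNorm e1 e2 t ^ 2 ≤ lyapunov M e1 e2 t :=
        hlam1 ▸ min_mul_zNorm_sq_le_lyapunov (hMb t ht).1
    _ ≤ lyapunov M e1 e2 t0 * exp (-(γ1 / lam2) * (t - t0)) :=
        le_mul_exp_of_hasDerivAt_le_mul hderiv hdecay t ht
    _ ≤ lam2 * zNorm e1 e2 t0 ^ 2 * exp (2 * (-(γ1 / (2 * lam2)) * (t - t0))) := by
        rw [show 2 * (-(γ1 / (2 * lam2)) * (t - t0)) = -(γ1 / lam2) * (t - t0) by ring]
        gcongr
        exact hlam2 ▸ lyapunov_le_max_mul_zNorm_sq (hMb t0 ht0).2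

/-- Theorem 1 of the paper: exponential stability of the tracking error in the
controlled region, for classical solutions of the closed-loop error system
under the sliding-mode controller. -/
theorem controlled_region_exponential_stability
    (cm cM c1 c2 c3 ε cΩ1 α k1 k2 k3 k4 t0 t1 lam1 lam2 γ1 : ℝ)
    (hcm : 0 < cm) (hcmM : cm ≤ cM)
    (hc1 : 0 < c1) (hc2 : 0 < c2) (hc3 : 0 < c3) (hε : 0 < ε) (hcΩ1 : 0 < cΩ1)
    (ht01 : t0 ≤ t1)
    (hlam1 : lam1 = min (1/2) (cm/2)) (hlam2 : lam2 = max (1/2) (cM/2))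
    (hγ1 : γ1 = min (α - 1/2) (ε * cΩ1 * k1 - 1/2))
    (hα : 1/2 < α) (hk1 : 1/(2 * ε * cΩ1) < k1)
    (hk2 : c1/(ε * cΩ1) ≤ k2) (hk3 : c2/(ε * cΩ1) ≤ k3) (hk4 : c3/(ε * cΩ1) ≤ k4)
    (e1 e2 M χ V Bk Ω : ℝ → ℝ)
    (hMb : ∀ t ∈ Set.Icc t0 t1, cm ≤ M t ∧ M t ≤ cM)
    (hMdiff : ∀ t ∈ Set.Icc t0 t1, DifferentiableAt ℝ M t)
    (hV : ∀ t ∈ Set.Icc t0 t1, V t = deriv M t / 2)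
    (hχ : ∀ t ∈ Set.Icc t0 t1,
      |χ t| ≤ c1 + c2 * zNorm e1 e2 t + c3 * (zNorm e1 e2 t) ^ 2)
    (hBk : ∀ t ∈ Set.Icc t0 t1, Bk t ≤ -ε)
    (hΩ : ∀ t ∈ Set.Icc t0 t1, cΩ1 ≤ Ω t)
    (he1 : ∀ t ∈ Set.Icc t0 t1, HasDerivAt e1 (e2 t - α * e1 t) t)
    (he2diff : ∀ t ∈ Set.Icc t0 t1, DifferentiableAt ℝ e2 t)
    (he2 : ∀ t ∈ Set.Icc t0 t1,
      M t * deriv e2 t = χ t - V t * e2 t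
        + Bk t * Ω t * (k1 * e2 t
          + (k2 + k3 * zNorm e1 e2 t + k4 * (zNorm e1 e2 t) ^ 2)
              * Real.sign (e2 t))) :
    ∀ t ∈ Set.Icc t0 t1,
      zNorm e1 e2 t ≤ Real.sqrt (lam2 / lam1) * zNorm e1 e2 t0
        * Real.exp (-(γ1 / (2 * lam2)) * (t - t0)) :=
  controlled_region_exponential_stability_general cm cM c1 c2 c3 ε cΩ1 α k1 k2 k3 k4 t0 t1 lam1 lam2
    γ1 hcm hε hcΩ1 hlam1 hlam2 hγ1 hα hk1 hk2 hk3 hk4 e1 e2 M χ V Bk Ω hMb hMdiff hV hχ hBk hΩ he1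
    he2diff he2
end

section
/- Let α, c1, c2, c3, λ1 > 0. For all real numbers e1, e2, χ, V with |χ| ≤ c1 + c2‖z‖ + c3‖z‖² and λ1‖z‖² ≤ V, the following inequality holds: −α e1² + e1 e2 + χ e2 ≤ (c1/√λ1)·V^{1/2} + ((c2 + 1/2)/λ1)·V + (c3/λ1^{3/2})·V^{3/2}. -/
/-! On the uncontrolled region, `-α e₁² ≤ 0`, `e₁ e₂ ≤ ‖z‖²/2` and `|χ e₂| ≤ |χ| ‖z‖`, so the
expression is at most the cubic `c₁‖z‖ + (c₂ + 1/2)‖z‖² + c₃‖z‖³`. Since `√λ₁ ‖z‖ ≤ √V`, each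
monomial `‖z‖ᵏ` is at most `(√V / √λ₁)ᵏ`. -/

open Real

lemma neg_mul_sq_add_mul_add_mul_le {α p e₁ e₂ χ : ℝ} (hα : 0 ≤ α) (hχ : |χ| ≤ p) :
    -α * e₁ ^ 2 + e₁ * e₂ + χ * e₂ ≤ √(e₁ ^ 2 + e₂ ^ 2) ^ 2 / 2 + p * √(e₁ ^ 2 + e₂ ^ 2) := by
  have hsq : √(e₁ ^ 2 + e₂ ^ 2) ^ 2 = e₁ ^ 2 + e₂ ^ 2 := sq_sqrt (by positivity)
  have he₂ : |e₂| ≤ √(e₁ ^ 2 + e₂ ^ 2) := abs_le_sqrt (le_add_of_nonneg_left (sq_nonneg e₁))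
  have hcross : e₁ * e₂ ≤ √(e₁ ^ 2 + e₂ ^ 2) ^ 2 / 2 := by
    rw [hsq]; linarith [two_mul_le_add_sq e₁ e₂]
  have hχe₂ : χ * e₂ ≤ p * √(e₁ ^ 2 + e₂ ^ 2) :=
    calc χ * e₂ ≤ |χ| * |e₂| := by rw [← abs_mul]; exact le_abs_self _
      _ ≤ p * √(e₁ ^ 2 + e₂ ^ 2) := mul_le_mul hχ he₂ (abs_nonneg _) ((abs_nonneg _).trans hχ)
  linarith [mul_nonneg hα (sq_nonneg e₁)]

lemma mul_sqrt_le_sqrt_of_mul_sq_le {lam r V : ℝ} (hlam : 0 ≤ lam) (hr : 0 ≤ r)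
    (h : lam * r ^ 2 ≤ V) : r * √lam ≤ √V := by
  simpa [sqrt_mul hlam, sqrt_sq hr, mul_comm] using sqrt_le_sqrt h

lemma mul_pow_le_div_pow_mul_pow {c r ρ s : ℝ} (n : ℕ) (hc : 0 ≤ c) (hr : 0 ≤ r) (hρ : 0 < ρ)
    (h : r * ρ ≤ s) : c * r ^ n ≤ c / ρ ^ n * s ^ n := by
  rw [div_mul_eq_mul_div, le_div_iff₀ (by positivity), mul_assoc, ← mul_pow]
  gcongr

/-- Inequalities (29)–(30): bound on the Lyapunov derivative expression in the
uncontrolled region in terms of `V^{1/2}`, `V`, and `V^{3/2}`. -/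
theorem uncontrolled_region_derivative_bound (α c1 c2 c3 lam1 : ℝ)
    (hα : 0 < α) (hc1 : 0 < c1) (hc2 : 0 < c2) (hc3 : 0 < c3) (hlam1 : 0 < lam1) :
    ∀ e1 e2 χ V : ℝ,
      |χ| ≤ c1 + c2 * Real.sqrt (e1 ^ 2 + e2 ^ 2)
            + c3 * Real.sqrt (e1 ^ 2 + e2 ^ 2) ^ 2 →
      lam1 * Real.sqrt (e1 ^ 2 + e2 ^ 2) ^ 2 ≤ V →
      -α * e1 ^ 2 + e1 * e2 + χ * e2
        ≤ (c1 / Real.sqrt lam1) * V ^ ((1 : ℝ)/2)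
          + ((c2 + 1/2) / lam1) * V
          + (c3 / lam1 ^ ((3 : ℝ)/2)) * V ^ ((3 : ℝ)/2) := by
  intro e1 e2 χ V hχ hV
  set r := √(e1 ^ 2 + e2 ^ 2)
  have hr : 0 ≤ r := sqrt_nonneg _
  have hV₀ : 0 ≤ V := le_trans (by positivity) hV
  have hρ : 0 < √lam1 := sqrt_pos.mpr hlam1
  have hrV := mul_sqrt_le_sqrt_of_mul_sq_le hlam1.le hr hV
  calc -α * e1 ^ 2 + e1 * e2 + χ * e2
      ≤ c1 * r ^ 1 + (c2 + 1 / 2) * r ^ 2 + c3 * r ^ 3 := by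
        linear_combination neg_mul_sq_add_mul_add_mul_le (e₁ := e1) (e₂ := e2) hα.le hχ
    _ ≤ c1 / √lam1 ^ 1 * √V ^ 1 + (c2 + 1 / 2) / √lam1 ^ 2 * √V ^ 2
          + c3 / √lam1 ^ 3 * √V ^ 3 := by
        gcongr ?_ + ?_ + ?_ <;> apply mul_pow_le_div_pow_mul_pow _ _ hr hρ hrV <;> positivity
    _ = _ := by
        rw [← sqrt_eq_rpow, rpow_div_two_eq_sqrt _ hlam1.le, rpow_div_two_eq_sqrt _ hV₀, rpow_ofNat,
          rpow_ofNat, sq_sqrt hlam1.le, sq_sqrt hV₀, pow_one, pow_one]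
end

section
/- Let A, B, C > 0 with 4AC > B², and set ω ≜ √(4AC − B²). Suppose V : [t0, t1] → ℝ is differentiable, V(t) ≥ 0, and V′(t) ≤ A·V(t)^{1/2} + B·V(t) + C·V(t)^{3/2} for all t ∈ [t0, t1]. If (ω/4)(t1 − t0) + arctan((2C√(V(t0)) + B)/ω) < π/2, then for all t ∈ [t0, t1]: V(t) ≤ (1/(4C²))·[ω·tan((ω/4)(t − t0) + arctan((2C√(V(t0)) + B)/ω)) − B]². -/
open Set Real Topology

/-!
Since `ω² + (2Cy + B)² = 4C (A + By + Cy²)`, the profile `g = (ω tan θ - B) / (2C)` driven by a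
phase `θ` of speed `c` satisfies `g' = (2c/ω) (A + Bg + Cg²)`; for `c = ω/4` the function `g²`
solves `u' = A u^{1/2} + B u + C u^{3/2}`. This right-hand side is not Lipschitz at `0`, so instead
of comparing with that solution we compare with the strict supersolutions of speed `ω/4 + ε` and
initial value `√(V t0) + ε`: at a first contact with `V` they grow strictly faster, so they stay
above `V`, and the bound follows as `ε → 0`.
-/

noncomputable def riccatiTan (B C ω θ : ℝ) : ℝ := (ω * tan θ - B) / (2 * C)

section Riccati

variable {A B C ω : ℝ}

lemma riccatiTan_arctan (hC : C ≠ 0) (hω : ω ≠ 0) (y : ℝ) :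
    riccatiTan B C ω (arctan ((2 * C * y + B) / ω)) = y := by
  rw [riccatiTan, tan_arctan]
  field_simp
  ring

lemma riccatiTan_sq (θ : ℝ) :
    riccatiTan B C ω θ ^ 2 = 1 / (4 * C ^ 2) * (ω * tan θ - B) ^ 2 := by
  rw [riccatiTan, div_pow]
  ring

lemma strictMonoOn_riccatiTan (hC : 0 < C) (hω : 0 < ω) :
    StrictMonoOn (riccatiTan B C ω) (Ioo (-(π / 2)) (π / 2)) := fun _ hx _ hy hxy => by
  have := strictMonoOn_tan hx hy hxy
  unfold riccatiTan
  gcongr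

lemma continuousAt_riccatiTan {θ : ℝ} (hθ : cos θ ≠ 0) :
    ContinuousAt (riccatiTan B C ω) θ :=
  (((continuousAt_tan.2 hθ).const_mul ω).sub continuousAt_const).div_const _

lemma riccati_complete_square (hω : ω ^ 2 = 4 * A * C - B ^ 2) (y : ℝ) :
    ω ^ 2 + (2 * C * y + B) ^ 2 = 4 * C * (A + B * y + C * y ^ 2) := by
  rw [hω]
  ring

lemma riccati_quadratic_pos (hC : 0 < C) (hω : ω ^ 2 = 4 * A * C - B ^ 2) (hω0 : ω ≠ 0) (y : ℝ) :
    0 < A + B * y + C * y ^ 2 := by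
  have := riccati_complete_square hω y
  nlinarith [pow_pos (abs_pos.2 hω0) 2, sq_abs ω, sq_nonneg (2 * C * y + B)]

lemma hasDerivAt_riccatiTan {θ : ℝ → ℝ} {c t : ℝ} (hω : ω ^ 2 = 4 * A * C - B ^ 2)
    (hω0 : ω ≠ 0) (hC : C ≠ 0) (hθ : HasDerivAt θ c t) (hcos : cos (θ t) ≠ 0) :
    HasDerivAt (fun s => riccatiTan B C ω (θ s))
      (2 * c / ω * (A + B * riccatiTan B C ω (θ t) + C * riccatiTan B C ω (θ t) ^ 2)) t := by
  have h := ((((hasDerivAt_tan hcos).comp t hθ).const_mul ω).sub_const B).div_const (2 * C)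
  refine h.congr_deriv ?_
  have hsec : 1 / cos (θ t) ^ 2 = 1 + tan (θ t) ^ 2 := by
    rw [tan_eq_sin_div_cos]
    field_simp
    linarith [sin_sq_add_cos_sq (θ t)]
  rw [hsec, riccatiTan]
  field_simp
  linear_combination c * hω

lemma sq_rpow_half {s : ℝ} (hs : 0 ≤ s) : (s ^ 2) ^ ((1 : ℝ) / 2) = s := by
  rw [← rpow_natCast, ← rpow_mul hs]
  norm_num

lemma sq_rpow_three_halves {s : ℝ} (hs : 0 ≤ s) : (s ^ 2) ^ ((3 : ℝ) / 2) = s ^ 3 := by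
  rw [← rpow_natCast, ← rpow_mul hs]
  norm_num

lemma le_sq_sqrt_add (x : ℝ) {ε : ℝ} (hε : 0 ≤ ε) : x ≤ (√x + ε) ^ 2 := by
  rcases le_or_gt 0 x with hx | hx
  · nlinarith [sq_sqrt hx, sqrt_nonneg x]
  · nlinarith [sq_nonneg (√x + ε)]

theorem le_sq_of_strict_supersolution {V V' g g' : ℝ → ℝ} {a b : ℝ}
    (hV : ∀ t ∈ Icc a b, HasDerivAt V (V' t) t)
    (hineq : ∀ t ∈ Icc a b,
      V' t ≤ A * (V t) ^ ((1 : ℝ) / 2) + B * V t + C * (V t) ^ ((3 : ℝ) / 2))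
    (hg : ∀ t ∈ Icc a b, HasDerivAt g (g' t) t) (hg_pos : ∀ t ∈ Icc a b, 0 < g t)
    (hg' : ∀ t ∈ Icc a b, (A + B * g t + C * g t ^ 2) / 2 < g' t) (ha : V a ≤ g a ^ 2) :
    ∀ t ∈ Icc a b, V t ≤ g t ^ 2 := by
  have hg2 : ∀ t ∈ Icc a b, HasDerivAt (fun s => g s ^ 2) (2 * g t * g' t) t := fun t ht => by
    simpa using (hg t ht).fun_pow 2
  refine image_le_of_deriv_right_lt_deriv_boundary'
    (fun t ht => (hV t ht).continuousAt.continuousWithinAt)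
    (fun t ht => (hV t (Ico_subset_Icc_self ht)).hasDerivWithinAt) ha
    (fun t ht => (hg2 t ht).continuousAt.continuousWithinAt)
    (fun t ht => (hg2 t (Ico_subset_Icc_self ht)).hasDerivWithinAt) ?_
  intro t ht hcontact
  have ht' := Ico_subset_Icc_self ht
  have hpos := hg_pos t ht'
  calc V' t ≤ g t * (A + B * g t + C * g t ^ 2) := by
        have h := hineq t ht'
        rw [hcontact, sq_rpow_half hpos.le, sq_rpow_three_halves hpos.le] at h
        linear_combination h
    _ < 2 * g t * g' t := by nlinarith [hg' t ht']

lemma affine_add_arctan_mem_Ioo {c x s t0 t1 : ℝ} (hc : 0 ≤ c) (hs : s ∈ Icc t0 t1)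
    (h : c * (t1 - t0) + arctan x < π / 2) : c * (s - t0) + arctan x ∈ Ioo (-(π / 2)) (π / 2) := by
  have h0 : 0 ≤ c * (s - t0) := mul_nonneg hc (sub_nonneg.2 hs.1)
  have h1 : c * (s - t0) ≤ c * (t1 - t0) := by gcongr; exact hs.2
  exact ⟨by linarith [neg_pi_div_two_lt_arctan x], by linarith⟩

theorem le_sq_riccatiTan {V V' : ℝ → ℝ} {c y₀ t0 t1 : ℝ} (hC : 0 < C) (hω0 : 0 < ω)
    (hω : ω ^ 2 = 4 * A * C - B ^ 2) (hc : ω / 4 < c) (hy₀ : 0 < y₀)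
    (hV : ∀ t ∈ Icc t0 t1, HasDerivAt V (V' t) t)
    (hineq : ∀ t ∈ Icc t0 t1,
      V' t ≤ A * (V t) ^ ((1 : ℝ) / 2) + B * V t + C * (V t) ^ ((3 : ℝ) / 2))
    (hV₀ : V t0 ≤ y₀ ^ 2) (hlt : c * (t1 - t0) + arctan ((2 * C * y₀ + B) / ω) < π / 2) :
    ∀ t ∈ Icc t0 t1,
      V t ≤ riccatiTan B C ω (c * (t - t0) + arctan ((2 * C * y₀ + B) / ω)) ^ 2 := by
  set α := arctan ((2 * C * y₀ + B) / ω)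
  have hc0 : 0 ≤ c := by linarith
  have hmem := fun t (ht : t ∈ Icc t0 t1) => affine_add_arctan_mem_Ioo hc0 ht hlt
  have hα : riccatiTan B C ω α = y₀ := riccatiTan_arctan hC.ne' hω0.ne' y₀
  refine le_sq_of_strict_supersolution hV hineq
    (fun t ht => hasDerivAt_riccatiTan hω hω0.ne' hC.ne'
      (by simpa using (((hasDerivAt_id t).sub_const t0).const_mul c).add_const α)
      (cos_pos_of_mem_Ioo (hmem t ht)).ne') (fun t ht => ?_) (fun t ht => ?_) (by simpa [hα])
  · have hα_le : α ≤ c * (t - t0) + α := le_add_of_nonneg_left (mul_nonneg hc0 (sub_nonneg.2 ht.1))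
    have hα_mem : α ∈ Ioo (-(π / 2)) (π / 2) := ⟨neg_pi_div_two_lt_arctan _, arctan_lt_pi_div_two _⟩
    calc 0 < y₀ := hy₀
      _ ≤ _ := hα ▸ (strictMonoOn_riccatiTan hC hω0).monotoneOn hα_mem (hmem t ht) hα_le
  · have hQ := riccati_quadratic_pos hC hω hω0.ne' (riccatiTan B C ω (c * (t - t0) + α))
    have hspeed : 1 / 2 < 2 * c / ω := by rw [lt_div_iff₀ hω0]; linarith
    nlinarith

end Riccati

theorem riccati_comparison_general (A B C t0 t1 ω : ℝ)
    (hC : 0 < C) (hAC : B ^ 2 < 4 * A * C)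
    (hω : ω = Real.sqrt (4 * A * C - B ^ 2))
    (V V' : ℝ → ℝ)
    (hV : ∀ t ∈ Set.Icc t0 t1, HasDerivAt V (V' t) t)
    (hineq : ∀ t ∈ Set.Icc t0 t1,
      V' t ≤ A * (V t) ^ ((1 : ℝ)/2) + B * V t + C * (V t) ^ ((3 : ℝ)/2))
    (hrdt : (ω/4) * (t1 - t0)
        + Real.arctan ((2 * C * Real.sqrt (V t0) + B)/ω) < Real.pi/2) :
    ∀ t ∈ Set.Icc t0 t1,
      V t ≤ (1/(4 * C ^ 2)) *
        (ω * Real.tan ((ω/4) * (t - t0)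
            + Real.arctan ((2 * C * Real.sqrt (V t0) + B)/ω)) - B) ^ 2 := by
  have hω0 : 0 < ω := hω ▸ sqrt_pos.2 (by linarith)
  have hω2 : ω ^ 2 = 4 * A * C - B ^ 2 := hω ▸ sq_sqrt (by linarith)
  intro t ht
  let Θ : ℝ → ℝ → ℝ := fun ε s => (ω / 4 + ε) * (s - t0) + arctan ((2 * C * (√(V t0) + ε) + B) / ω)
  have hΘ : ∀ s, Continuous (Θ · s) := fun s => by fun_prop
  have hΘ0 : ∀ s, Θ 0 s = ω / 4 * (s - t0) + arctan ((2 * C * √(V t0) + B) / ω) := by simp [Θ]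
  have hperturbed : ∀ᶠ ε in 𝓝[>] 0, V t ≤ riccatiTan B C ω (Θ ε t) ^ 2 := by
    have hlt : ∀ᶠ ε in 𝓝 0, Θ ε t1 < π / 2 :=
      (hΘ t1).continuousAt.eventually_lt continuousAt_const (by rwa [hΘ0])
    filter_upwards [nhdsWithin_le_nhds hlt, self_mem_nhdsWithin] with ε hε (hε0 : 0 < ε)
    exact le_sq_riccatiTan hC hω0 hω2 (by linarith) (by positivity) hV hineq
      (le_sq_sqrt_add _ hε0.le) hε t ht
  have hcos : cos (Θ 0 t) ≠ 0 := by
    rw [hΘ0]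
    exact (cos_pos_of_mem_Ioo (affine_add_arctan_mem_Ioo (by positivity) ht hrdt)).ne'
  have hcont : ContinuousAt (fun ε => riccatiTan B C ω (Θ ε t) ^ 2) 0 :=
    ((continuousAt_riccatiTan hcos).comp (f := (Θ · t)) (hΘ t).continuousAt).pow 2
  have hlim := ge_of_tendsto hcont.continuousWithinAt.tendsto hperturbed
  rwa [hΘ0, riccatiTan_sq] at hlim

/-- Comparison lemma underlying Theorem 2: a solution of the Riccati-type
differential inequality `V' ≤ A V^{1/2} + B V + C V^{3/2}` admits a
tangent-shaped upper bound with finite escape time, provided the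
reverse dwell-time condition holds. -/
theorem riccati_comparison (A B C t0 t1 ω : ℝ)
    (hA : 0 < A) (hB : 0 < B) (hC : 0 < C) (hAC : B ^ 2 < 4 * A * C)
    (ht : t0 ≤ t1)
    (hω : ω = Real.sqrt (4 * A * C - B ^ 2))
    (V V' : ℝ → ℝ)
    (hV : ∀ t ∈ Set.Icc t0 t1, HasDerivAt V (V' t) t)
    (hVnonneg : ∀ t ∈ Set.Icc t0 t1, 0 ≤ V t)
    (hineq : ∀ t ∈ Set.Icc t0 t1,
      V' t ≤ A * (V t) ^ ((1 : ℝ)/2) + B * V t + C * (V t) ^ ((3 : ℝ)/2))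
    (hrdt : (ω/4) * (t1 - t0)
        + Real.arctan ((2 * C * Real.sqrt (V t0) + B)/ω) < Real.pi/2) :
    ∀ t ∈ Set.Icc t0 t1,
      V t ≤ (1/(4 * C ^ 2)) *
        (ω * Real.tan ((ω/4) * (t - t0)
            + Real.arctan ((2 * C * Real.sqrt (V t0) + B)/ω)) - B) ^ 2 :=
  riccati_comparison_general A B C t0 t1 ω hC hAC hω V V' hV hineq hrdt
end

section
/- Let α > 0, λ2 ≥ λ1 > 0, and let q, q_d : [a, b] → ℝ be differentiable with e1 ≜ q_d − q and e2 ≜ e1′ + α e1. Suppose q_d′(t) ≤ Q for all t ∈ [a, b], ‖z(t)‖ ≤ √(λ2/λ1)·‖z(a)‖ for all t ∈ [a, b], q(b) − q(a) = Δq > 0, and Q + (1 + α)√(λ2/λ1)·‖z(a)‖ > 0. Then the traversal time satisfies b − a ≥ Δq / (Q + (1 + α)√(λ2/λ1)·‖z(a)‖). -/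
/-!
Since `e₁ = q_d - q` and `e₂ = e₁' + α e₁`, the cadence is `q' = q_d' - e₂ + α e₁`, and both error
components are bounded by `‖z‖`; hence `q' ≤ Q + (1 + α) √(λ₂/λ₁) ‖z(a)‖` on `[a, b]`, and the
mean value inequality turns this speed bound into `Δq ≤ (Q + (1 + α) √(λ₂/λ₁) ‖z(a)‖) (b - a)`.
-/

open Set

theorem neg_add_mul_le_mul_sqrt_sq_add_sq {α x y : ℝ} (hα : 0 ≤ α) :
    -y + α * x ≤ (1 + α) * √(x ^ 2 + y ^ 2) := by
  have hx : |x| ≤ √(x ^ 2 + y ^ 2) := Real.abs_le_sqrt (by nlinarith [sq_nonneg y])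
  have hy : |y| ≤ √(x ^ 2 + y ^ 2) := Real.abs_le_sqrt (by nlinarith [sq_nonneg x])
  have hαx : α * x ≤ α * √(x ^ 2 + y ^ 2) :=
    mul_le_mul_of_nonneg_left ((le_abs_self x).trans hx) hα
  linarith [neg_le_abs y]

theorem deriv_le_deriv_add_mul_sqrt_error {q qd e : ℝ → ℝ} {α t : ℝ} (hα : 0 ≤ α)
    (hq : DifferentiableAt ℝ q t) (hqd : DifferentiableAt ℝ qd t) (he : e = qd - q) :
    deriv q t ≤ deriv qd t + (1 + α) * √(e t ^ 2 + (deriv e t + α * e t) ^ 2) := by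
  have hde : deriv e t = deriv qd t - deriv q t := by
    rw [he]
    exact deriv_sub hqd hq
  linarith [neg_add_mul_le_mul_sqrt_sq_add_sq (x := e t) (y := deriv e t + α * e t) hα]

theorem controlled_region_dwell_time_lower_bound_general
    (α lam1 lam2 Q Δq a b : ℝ)
    (hα : 0 < α) (hab : a ≤ b)
    (q qd e1 e2 : ℝ → ℝ)
    (hq : ∀ t ∈ Set.Icc a b, DifferentiableAt ℝ q t)
    (hqd : ∀ t ∈ Set.Icc a b, DifferentiableAt ℝ qd t)
    (he1 : ∀ t, e1 t = qd t - q t)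
    (he2 : ∀ t, e2 t = deriv e1 t + α * e1 t)
    (hQ : ∀ t ∈ Set.Icc a b, deriv qd t ≤ Q)
    (hz : ∀ t ∈ Set.Icc a b,
      Real.sqrt ((e1 t) ^ 2 + (e2 t) ^ 2)
        ≤ Real.sqrt (lam2/lam1) * Real.sqrt ((e1 a) ^ 2 + (e2 a) ^ 2))
    (hΔq : q b - q a = Δq)
    (hden : 0 < Q + (1 + α) * Real.sqrt (lam2/lam1)
        * Real.sqrt ((e1 a) ^ 2 + (e2 a) ^ 2)) :
    Δq / (Q + (1 + α) * Real.sqrt (lam2/lam1)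
        * Real.sqrt ((e1 a) ^ 2 + (e2 a) ^ 2)) ≤ b - a := by
  have hspeed : ∀ t ∈ Icc a b,
      deriv q t ≤ Q + (1 + α) * Real.sqrt (lam2/lam1) * Real.sqrt ((e1 a) ^ 2 + (e2 a) ^ 2) := by
    intro t ht
    calc deriv q t ≤ deriv qd t + (1 + α) * √(e1 t ^ 2 + e2 t ^ 2) := by
          simpa only [he2] using
            deriv_le_deriv_add_mul_sqrt_error hα.le (hq t ht) (hqd t ht) (funext he1)
      _ ≤ _ := by
          rw [mul_assoc _ (Real.sqrt (lam2/lam1))]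
          gcongr
          exacts [hQ t ht, hz t ht]
  have hmvt := (convex_Icc a b).image_sub_le_mul_sub_of_deriv_le
    (fun t ht => (hq t ht).continuousAt.continuousWithinAt)
    (fun t ht => (hq t (interior_subset ht)).differentiableWithinAt)
    (fun t ht => hspeed t (interior_subset ht)) a (left_mem_Icc.2 hab) b (right_mem_Icc.2 hab) hab
  rw [div_le_iff₀ hden, ← hΔq, mul_comm]
  exact hmvt

/-- Proposition 1 of the paper, bound (33): the time spent traversing a
controlled region of angular length `Δq` admits a positive lower bound. -/
theorem controlled_region_dwell_time_lower_bound
    (α lam1 lam2 Q Δq a b : ℝ)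
    (hα : 0 < α) (hlam1 : 0 < lam1) (hlam : lam1 ≤ lam2) (hab : a ≤ b)
    (q qd e1 e2 : ℝ → ℝ)
    (hq : ∀ t ∈ Set.Icc a b, DifferentiableAt ℝ q t)
    (hqd : ∀ t ∈ Set.Icc a b, DifferentiableAt ℝ qd t)
    (he1 : ∀ t, e1 t = qd t - q t)
    (he2 : ∀ t, e2 t = deriv e1 t + α * e1 t)
    (hQ : ∀ t ∈ Set.Icc a b, deriv qd t ≤ Q)
    (hz : ∀ t ∈ Set.Icc a b,
      Real.sqrt ((e1 t) ^ 2 + (e2 t) ^ 2)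
        ≤ Real.sqrt (lam2/lam1) * Real.sqrt ((e1 a) ^ 2 + (e2 a) ^ 2))
    (hΔq : q b - q a = Δq) (hΔqpos : 0 < Δq)
    (hden : 0 < Q + (1 + α) * Real.sqrt (lam2/lam1)
        * Real.sqrt ((e1 a) ^ 2 + (e2 a) ^ 2)) :
    Δq / (Q + (1 + α) * Real.sqrt (lam2/lam1)
        * Real.sqrt ((e1 a) ^ 2 + (e2 a) ^ 2)) ≤ b - a :=
  controlled_region_dwell_time_lower_bound_general α lam1 lam2 Q Δq a b hα hab q qd e1 e2 hq hqd he1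
    he2 hQ hz hΔq hden
end

section
/- Let α > 0, λ2 ≥ λ1 > 0, Δt_min > 0, and let q, q_d : [a, b] → ℝ be differentiable with e1 ≜ q_d − q and e2 ≜ e1′ + α e1. Suppose ‖z(t)‖ ≤ √(λ2/λ1)·‖z(a)‖ for all t ∈ [a, b], q(b) − q(a) = Δq > 0, and the desired cadence satisfies, for all t ∈ [a, b], q_d′(t) ≤ Δq/Δt_min − (1 + α)√(λ2/λ1)·‖z(a)‖, with this upper bound positive. Then b − a ≥ Δt_min. -/
/-!
Since `e₁ = q_d - q` and `e₂ = e₁' + α e₁`, the actual cadence is `q' = q_d' - e₂ + α e₁`.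
Both error components are bounded by the bound `M = √(λ₂/λ₁)‖z(a)‖` on `‖z‖`, so
`q' ≤ q_d' + (1 + α) M ≤ Δq/Δt_min`. By the mean value inequality
`Δq = q(b) - q(a) ≤ (Δq/Δt_min)(b - a)`, and dividing by `Δq > 0` gives `Δt_min ≤ b - a`.
-/

open Set

theorem abs_fst_le_sqrt_sq_add_sq (x y : ℝ) : |x| ≤ √(x ^ 2 + y ^ 2) :=
  Real.abs_le_sqrt (le_add_of_nonneg_right (sq_nonneg y))

theorem abs_snd_le_sqrt_sq_add_sq (x y : ℝ) : |y| ≤ √(x ^ 2 + y ^ 2) :=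
  Real.abs_le_sqrt (le_add_of_nonneg_left (sq_nonneg x))

theorem deriv_le_deriv_add_of_abs_filtered_error_le {q qd e : ℝ → ℝ} {α M t : ℝ} (hα : 0 ≤ α)
    (hq : DifferentiableAt ℝ q t) (hqd : DifferentiableAt ℝ qd t) (he : e = qd - q)
    (he_le : |e t| ≤ M) (hfiltered_le : |deriv e t + α * e t| ≤ M) :
    deriv q t ≤ deriv qd t + (1 + α) * M := by
  have hde : deriv e t = deriv qd t - deriv q t := by rw [he]; exact deriv_sub hqd hq
  have hαe : α * e t ≤ α * M := mul_le_mul_of_nonneg_left (abs_le.mp he_le).2 hα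
  linarith [(abs_le.mp hfiltered_le).1]

theorem sub_le_mul_sub_of_deriv_le_on_Icc {f : ℝ → ℝ} {C a b : ℝ} (hab : a ≤ b)
    (hf : ∀ t ∈ Icc a b, DifferentiableAt ℝ f t) (hf' : ∀ t ∈ Icc a b, deriv f t ≤ C) :
    f b - f a ≤ C * (b - a) :=
  (convex_Icc a b).image_sub_le_mul_sub_of_deriv_le
    (fun t ht => (hf t ht).continuousAt.continuousWithinAt)
    (fun t ht => (hf t (interior_subset ht)).differentiableWithinAt)
    (fun t ht => hf' t (interior_subset ht)) a (left_mem_Icc.mpr hab) b (right_mem_Icc.mpr hab) hab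

theorem le_of_le_div_mul {x y d : ℝ} (hx : 0 < x) (hy : 0 < y) (h : x ≤ x / y * d) : y ≤ d := by
  rw [div_mul_eq_mul_div, le_div_iff₀ hy] at h
  exact le_of_mul_le_mul_left h hx

theorem desired_cadence_guarantees_min_dwell_time_general
    (α lam1 lam2 Δtmin Δq a b : ℝ)
    (hα : 0 < α) (hΔtmin : 0 < Δtmin)
    (hab : a ≤ b)
    (q qd e1 e2 : ℝ → ℝ)
    (hq : ∀ t ∈ Set.Icc a b, DifferentiableAt ℝ q t)
    (hqd : ∀ t ∈ Set.Icc a b, DifferentiableAt ℝ qd t)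
    (he1 : ∀ t, e1 t = qd t - q t)
    (he2 : ∀ t, e2 t = deriv e1 t + α * e1 t)
    (hz : ∀ t ∈ Set.Icc a b,
      Real.sqrt ((e1 t) ^ 2 + (e2 t) ^ 2)
        ≤ Real.sqrt (lam2/lam1) * Real.sqrt ((e1 a) ^ 2 + (e2 a) ^ 2))
    (hΔq : q b - q a = Δq) (hΔqpos : 0 < Δq)
    (hQ : ∀ t ∈ Set.Icc a b,
      deriv qd t ≤ Δq/Δtmin - (1 + α) * Real.sqrt (lam2/lam1)
          * Real.sqrt ((e1 a) ^ 2 + (e2 a) ^ 2)) :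
    Δtmin ≤ b - a := by
  have hcadence : ∀ t ∈ Icc a b, deriv q t ≤ Δq / Δtmin := fun t ht => by
    have hbound := deriv_le_deriv_add_of_abs_filtered_error_le hα.le (hq t ht) (hqd t ht)
      (funext he1) ((abs_fst_le_sqrt_sq_add_sq _ (e2 t)).trans (hz t ht))
      (he2 t ▸ (abs_snd_le_sqrt_sq_add_sq (e1 t) _).trans (hz t ht))
    linarith [mul_assoc (1 + α) √(lam2 / lam1) √(e1 a ^ 2 + e2 a ^ 2), hQ t ht]
  have hmean := sub_le_mul_sub_of_deriv_le_on_Icc hab hq hcadence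
  exact le_of_le_div_mul hΔqpos hΔtmin (hΔq ▸ hmean)

/-- Sufficient condition (34): if the maximum desired cadence is small enough,
then the time spent in the controlled region exceeds a prescribed minimum
dwell time `Δt_min`. -/
theorem desired_cadence_guarantees_min_dwell_time
    (α lam1 lam2 Δtmin Δq a b : ℝ)
    (hα : 0 < α) (hlam1 : 0 < lam1) (hlam : lam1 ≤ lam2) (hΔtmin : 0 < Δtmin)
    (hab : a ≤ b)
    (q qd e1 e2 : ℝ → ℝ)
    (hq : ∀ t ∈ Set.Icc a b, DifferentiableAt ℝ q t)
    (hqd : ∀ t ∈ Set.Icc a b, DifferentiableAt ℝ qd t)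
    (he1 : ∀ t, e1 t = qd t - q t)
    (he2 : ∀ t, e2 t = deriv e1 t + α * e1 t)
    (hz : ∀ t ∈ Set.Icc a b,
      Real.sqrt ((e1 t) ^ 2 + (e2 t) ^ 2)
        ≤ Real.sqrt (lam2/lam1) * Real.sqrt ((e1 a) ^ 2 + (e2 a) ^ 2))
    (hΔq : q b - q a = Δq) (hΔqpos : 0 < Δq)
    (hQ : ∀ t ∈ Set.Icc a b,
      deriv qd t ≤ Δq/Δtmin - (1 + α) * Real.sqrt (lam2/lam1)
          * Real.sqrt ((e1 a) ^ 2 + (e2 a) ^ 2))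
    (hpos : 0 < Δq/Δtmin - (1 + α) * Real.sqrt (lam2/lam1)
        * Real.sqrt ((e1 a) ^ 2 + (e2 a) ^ 2)) :
    Δtmin ≤ b - a :=
  desired_cadence_guarantees_min_dwell_time_general α lam1 lam2 Δtmin Δq a b hα hΔtmin hab q qd e1
    e2 hq hqd he1 he2 hz hΔq hΔqpos hQ
end

section
/- Let α > 0, λ2 ≥ λ1 > 0, γ1 > 0, Δt_min > 0, q̇crit > 0. Let q, q_d be differentiable at time t_off, with e1 ≜ q_d − q and e2 ≜ e1′ + α e1, and suppose the error at t_off satisfies the exponential decay estimate ‖z(t_off)‖ ≤ √(λ2/λ1)·‖z(t_on)‖·e^{−γ1 Δt_min/(2 λ2)} for some earlier on-time t_on. If the desired cadence satisfies q_d′(t_off) ≥ q̇crit + (1 + α)√(λ2/λ1)·‖z(t_on)‖·e^{−γ1 Δt_min/(2 λ2)}, then q′(t_off) ≥ q̇crit. -/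
/-! Since `e₁ = q_d − q` and `e₁′ = e₂ − α e₁`, we have `q′ = q_d′ − e₂ + α e₁`, and each of
`|e₁|`, `|e₂|` is at most `‖z‖`; so `q′` falls short of `q_d′` by at most `(1 + α)‖z‖`,
which the margin in the cadence hypothesis absorbs. -/

lemma abs_sub_mul_le_one_add_mul_sqrt {α : ℝ} (hα : 0 ≤ α) (a b : ℝ) :
    |b - α * a| ≤ (1 + α) * √(a ^ 2 + b ^ 2) := by
  have ha : |a| ≤ √(a ^ 2 + b ^ 2) := Real.abs_le_sqrt (by nlinarith [sq_nonneg b])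
  have hb : |b| ≤ √(a ^ 2 + b ^ 2) := Real.abs_le_sqrt (by nlinarith [sq_nonneg a])
  calc |b - α * a| ≤ |b| + |α * a| := abs_sub _ _
    _ = |b| + α * |a| := by rw [abs_mul, abs_of_nonneg hα]
    _ ≤ (1 + α) * √(a ^ 2 + b ^ 2) := by nlinarith

theorem off_time_velocity_exceeds_critical_general
    (α lam1 lam2 γ1 Δtmin qcrit toff Zon : ℝ)
    (hα : 0 < α)
    (q qd e1 e2 : ℝ → ℝ)
    (hq : DifferentiableAt ℝ q toff) (hqd : DifferentiableAt ℝ qd toff)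
    (he1 : ∀ t, e1 t = qd t - q t)
    (he2 : ∀ t, e2 t = deriv e1 t + α * e1 t)
    (hz : Real.sqrt ((e1 toff) ^ 2 + (e2 toff) ^ 2)
      ≤ Real.sqrt (lam2/lam1) * Zon * Real.exp (-γ1 * Δtmin / (2 * lam2)))
    (hqd' : deriv qd toff
      ≥ qcrit + (1 + α) * Real.sqrt (lam2/lam1) * Zon
          * Real.exp (-γ1 * Δtmin / (2 * lam2))) :
    deriv q toff ≥ qcrit := by
  have hde1 : deriv e1 toff = deriv qd toff - deriv q toff := by
    rw [show e1 = fun t => qd t - q t from funext he1, deriv_fun_sub hqd hq]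
  have hq' : deriv q toff = deriv qd toff - (e2 toff - α * e1 toff) := by
    rw [he2 toff, hde1]; ring
  have hgap := (abs_le.mp (abs_sub_mul_le_one_add_mul_sqrt hα.le (e1 toff) (e2 toff))).2
  have hscaled := mul_le_mul_of_nonneg_left hz (by linarith : (0 : ℝ) ≤ 1 + α)
  rw [hq']
  linarith

/-- Conditions (36)–(39): if the desired cadence at an off-time exceeds the
critical velocity by a margin proportional to the exponentially decayed
initial error, then the actual crank velocity entering the uncontrolled
region exceeds the critical velocity. -/
theorem off_time_velocity_exceeds_critical
    (α lam1 lam2 γ1 Δtmin qcrit toff Zon : ℝ)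
    (hα : 0 < α) (hlam1 : 0 < lam1) (hlam : lam1 ≤ lam2)
    (hγ1 : 0 < γ1) (hΔtmin : 0 < Δtmin) (hqcrit : 0 < qcrit) (hZon : 0 ≤ Zon)
    (q qd e1 e2 : ℝ → ℝ)
    (hq : DifferentiableAt ℝ q toff) (hqd : DifferentiableAt ℝ qd toff)
    (he1 : ∀ t, e1 t = qd t - q t)
    (he2 : ∀ t, e2 t = deriv e1 t + α * e1 t)
    (hz : Real.sqrt ((e1 toff) ^ 2 + (e2 toff) ^ 2)
      ≤ Real.sqrt (lam2/lam1) * Zon * Real.exp (-γ1 * Δtmin / (2 * lam2)))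
    (hqd' : deriv qd toff
      ≥ qcrit + (1 + α) * Real.sqrt (lam2/lam1) * Zon
          * Real.exp (-γ1 * Δtmin / (2 * lam2))) :
    deriv q toff ≥ qcrit :=
  off_time_velocity_exceeds_critical_general α lam1 lam2 γ1 Δtmin qcrit toff Zon hα q qd e1 e2 hq
    hqd he1 he2 hz hqd'
end
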